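/- Let $\Gamma$ be a measurable surface with finite area $|\Gamma|$, let $\ell \geq 0$, and let $T^{(\ell)}$ be a finite family of boxes on level $\ell$, all translates of a reference box $r^{(\ell)}$ by integer multiples of its side lengths, such that the set of points of $\Gamma$ lying in more than two boxes of $T^{(\ell)}$ has surface measure zero. Let $C_{da} > 0$ and define $T_{C_{da}}^{(\ell)} := \{t \in T^{(\ell)} : \mathrm{diam}(t)^{d-1} \leq C_{da} |t \cap \Gamma|\}$, where $|X|$ denotes the surface measure of $X \subseteq \Gamma$. Then $|T_{C_{da}}^{(\ell)}| \leq 2 C_{da} |\Gamma|\, \mathrm{diam}(r^{(\ell)})^{-(d-1)}$. -/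

import Mathlib

open MeasureTheory Metric
open scoped ENNReal

/-! Almost every point of `Γ` lies in at most two boxes, so the indicators of the boxes sum to at
most `2` almost everywhere and, integrating, the measures `|t ∩ Γ|` add up to at most `2 |Γ|`.
All boxes are translates of `r`, so each selected box contributes at least
`diam(r)^(d-1) / C_da` to that sum. -/

/-- The axis-parallel box with lower corner `a` and upper corner `b`. -/
def box {d : ℕ} (a b : Fin d → ℝ) : Set (EuclideanSpace ℝ (Fin d)) :=
  {x | ∀ i, x i ∈ Set.Icc (a i) (b i)}

/-- Translate of a set by a vector `c`. -/
def trBox {d : ℕ} (X : Set (EuclideanSpace ℝ (Fin d))) (c : EuclideanSpace ℝ (Fin d)) :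
    Set (EuclideanSpace ℝ (Fin d)) := (fun x => x + c) '' X

/-- The translation vector `δ ⊙ p` for an integer displacement `p`. -/
noncomputable def mvec {d : ℕ} (δ : Fin d → ℝ) (p : Fin d → ℤ) : EuclideanSpace ℝ (Fin d) :=
  WithLp.toLp 2 (fun i => δ i * (p i : ℝ))

open scoped Finset

section Multiplicity

open Finset

variable {α ι : Type*} [MeasurableSpace α] {μ : Measure α} {s : Finset ι} {t : ι → Set α}
  {k : ℕ}

open scoped Classical in
theorem sum_measure_le_mul_measure_univ_of_ae_card_le (ht : ∀ i ∈ s, NullMeasurableSet (t i) μ)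
    (hk : ∀ᵐ x ∂μ, #{i ∈ s | x ∈ t i} ≤ k) :
    ∑ i ∈ s, μ (t i) ≤ k * μ Set.univ :=
  calc ∑ i ∈ s, μ (t i) = ∑ i ∈ s, ∫⁻ x, (t i).indicator 1 x ∂μ :=
        sum_congr rfl fun i hi => (lintegral_indicator_one₀ (ht i hi)).symm
    _ = ∫⁻ x, ∑ i ∈ s, (t i).indicator 1 x ∂μ :=
        (lintegral_finsetSum' s fun i hi => aemeasurable_one.indicator₀ (ht i hi)).symm
    _ = ∫⁻ x, (#{i ∈ s | x ∈ t i} : ℝ≥0∞) ∂μ := by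
        simp only [Set.indicator_apply, Pi.one_apply, sum_boole]
    _ ≤ ∫⁻ _, (k : ℝ≥0∞) ∂μ := lintegral_mono_ae (hk.mono fun x hx => by exact_mod_cast hx)
    _ = k * μ Set.univ := lintegral_const _

open scoped Classical in
theorem sum_toReal_measure_le_mul_toReal_measure_univ_of_ae_card_le [IsFiniteMeasure μ]
    (ht : ∀ i ∈ s, NullMeasurableSet (t i) μ) (hk : ∀ᵐ x ∂μ, #{i ∈ s | x ∈ t i} ≤ k) :
    ∑ i ∈ s, (μ (t i)).toReal ≤ k * (μ Set.univ).toReal := by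
  rw [← ENNReal.toReal_sum fun i _ => measure_ne_top μ (t i), ← ENNReal.toReal_natCast k,
    ← ENNReal.toReal_mul]
  exact ENNReal.toReal_mono (by finiteness) (sum_measure_le_mul_measure_univ_of_ae_card_le ht hk)

end Multiplicity

open Finset in
theorem card_filter_mul_le_sum {ι : Type*} {s : Finset ι} {f : ι → ℝ} (hf : ∀ i ∈ s, 0 ≤ f i)
    (c : ℝ) [DecidablePred (c ≤ f ·)] : #{i ∈ s | c ≤ f i} * c ≤ ∑ i ∈ s, f i :=
  calc #{i ∈ s | c ≤ f i} * c ≤ ∑ i ∈ s with c ≤ f i, f i := by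
        simpa using card_nsmul_le_sum _ f c fun i hi => (mem_filter.1 hi).2
    _ ≤ ∑ i ∈ s, f i := sum_le_sum_of_subset_of_nonneg (filter_subset _ s) fun i hi _ => hf i hi

section Boxes

variable {d : ℕ}

theorem box_eq_preimage_Icc (a b : Fin d → ℝ) :
    box a b = PiLp.homeomorph 2 _ ⁻¹' Set.Icc a b := by
  ext x
  simp only [box, Set.mem_ofPred_eq, Set.mem_preimage, Set.mem_Icc, Pi.le_def, ← forall_and]
  rfl

theorem isCompact_box (a b : Fin d → ℝ) : IsCompact (box a b) := by
  rw [box_eq_preimage_Icc]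
  exact (PiLp.homeomorph 2 _).isCompact_preimage.2 isCompact_Icc

theorem IsClosed.trBox {X : Set (EuclideanSpace ℝ (Fin d))} (hX : IsClosed X)
    (c : EuclideanSpace ℝ (Fin d)) : IsClosed (trBox X c) :=
  (Homeomorph.addRight c).isClosedMap X hX

theorem diam_trBox (X : Set (EuclideanSpace ℝ (Fin d))) (c : EuclideanSpace ℝ (Fin d)) :
    diam (trBox X c) = diam X :=
  (isometry_add_right c).diam_image X

theorem diam_box_pow_pos {a b : Fin d → ℝ} (hab : ∀ i, a i < b i) :
    0 < diam (box a b) ^ (d - 1) := by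
  rcases Nat.eq_zero_or_pos d with rfl | hd
  · simp
  refine pow_pos (diam_pos ⟨WithLp.toLp 2 a, fun i => ⟨le_rfl, (hab i).le⟩,
    WithLp.toLp 2 b, fun i => ⟨(hab i).le, le_rfl⟩, fun h => ?_⟩ (isCompact_box a b).isBounded) _
  exact (hab ⟨0, hd⟩).ne (congrArg (· ⟨0, hd⟩) h)

end Boxes

open scoped Classical in
theorem stmt5_general (d : ℕ)
    (a b : Fin d → ℝ) (hab : ∀ i, a i < b i)
    (δ : Fin d → ℝ)
    (Γ : Set (EuclideanSpace ℝ (Fin d))) (μ : Measure (EuclideanSpace ℝ (Fin d)))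
    (hμΓ : μ Γ < ⊤) (hμsupp : ∀ X : Set (EuclideanSpace ℝ (Fin d)), μ X = μ (X ∩ Γ))
    (P : Finset (Fin d → ℤ))
    (hover : μ {x ∈ Γ | 2 < (P.filter fun p => x ∈ trBox (box a b) (mvec δ p)).card} = 0)
    (Cda : ℝ) (hCda : 0 < Cda) :
    ((P.filter fun p =>
          diam (trBox (box a b) (mvec δ p)) ^ (d - 1) ≤
            Cda * (μ (trBox (box a b) (mvec δ p) ∩ Γ)).toReal).card : ℝ) ≤
      2 * Cda * (μ Γ).toReal / diam (box a b) ^ (d - 1) := by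
  set T := fun p => trBox (box a b) (mvec δ p)
  have huniv : μ Set.univ = μ Γ := by rw [hμsupp, Set.univ_inter]
  have : IsFiniteMeasure μ := ⟨huniv ▸ hμΓ⟩
  have hmult : ∀ᵐ x ∂μ, #{p ∈ P | x ∈ T p} ≤ 2 := by
    rw [ae_iff, hμsupp, ← hover]
    congr 1
    ext x
    simp [and_comm, T]
  have hsum : ∑ p ∈ P, (μ (T p ∩ Γ)).toReal ≤ 2 * (μ Γ).toReal := by
    simp_rw [← hμsupp, ← huniv]
    exact_mod_cast sum_toReal_measure_le_mul_toReal_measure_univ_of_ae_card_le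
      (fun p _ => ((isCompact_box a b).isClosed.trBox _).nullMeasurableSet) hmult
  simp only [diam_trBox]
  rw [le_div_iff₀ (diam_box_pow_pos hab)]
  calc _ ≤ ∑ p ∈ P, Cda * (μ (T p ∩ Γ)).toReal :=
        card_filter_mul_le_sum (fun p _ => mul_nonneg hCda.le ENNReal.toReal_nonneg) _
    _ = Cda * ∑ p ∈ P, (μ (T p ∩ Γ)).toReal := (Finset.mul_sum ..).symm
    _ ≤ Cda * (2 * (μ Γ).toReal) := by gcongr
    _ = 2 * Cda * (μ Γ).toReal := by ring

open scoped Classical in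
/-- The number of level-`ℓ` boxes `t` with `diam(t)^{d-1} ≤ C_da |t ∩ Γ|` is
bounded by `2 C_da |Γ| diam(r^{(ℓ)})^{-(d-1)}`, provided the set of points of `Γ` lying in
more than two boxes has surface measure zero. -/
theorem stmt5 (d : ℕ) (hd : 1 ≤ d)
    (a b : Fin d → ℝ) (hab : ∀ i, a i < b i)
    (δ : Fin d → ℝ) (hδ : ∀ i, δ i = b i - a i)
    (Γ : Set (EuclideanSpace ℝ (Fin d))) (μ : Measure (EuclideanSpace ℝ (Fin d)))
    (hμΓ : μ Γ < ⊤) (hμsupp : ∀ X : Set (EuclideanSpace ℝ (Fin d)), μ X = μ (X ∩ Γ))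
    (P : Finset (Fin d → ℤ))
    (hover : μ {x ∈ Γ | 2 < (P.filter fun p => x ∈ trBox (box a b) (mvec δ p)).card} = 0)
    (Cda : ℝ) (hCda : 0 < Cda) :
    ((P.filter fun p =>
          diam (trBox (box a b) (mvec δ p)) ^ (d - 1) ≤
            Cda * (μ (trBox (box a b) (mvec δ p) ∩ Γ)).toReal).card : ℝ) ≤
      2 * Cda * (μ Γ).toReal / diam (box a b) ^ (d - 1) :=
  stmt5_general d a b hab δ Γ μ hμΓ hμsupp P hover Cda hCda
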